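/- Let f : U → ℝⁿ be a minimal immersion and φ := f_x − i·f_y. Then f is superconformal (its curvature ellipse is a nondegenerate circle at every point) if and only if ⟪φ′,φ′⟫ ≡ 0 on U and N₁(p) ≠ {0} for every p ∈ U. -/

import Mathlib

noncomputable section

open Complex Submodule Module
open scoped RealInnerProductSpace

/-- ℝⁿ as Euclidean space. -/
abbrev Euc (n : ℕ) : Type := EuclideanSpace ℝ (Fin n)
/-- ℂⁿ. -/
abbrev EucC (n : ℕ) : Type := EuclideanSpace ℂ (Fin n)

variable {n : ℕ}

/-- Partial derivative in the `x` direction. -/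
def pdx (f : ℝ × ℝ → Euc n) (p : ℝ × ℝ) : Euc n := fderiv ℝ f p (1, 0)

/-- Partial derivative in the `y` direction. -/
def pdy (f : ℝ × ℝ → Euc n) (p : ℝ × ℝ) : Euc n := fderiv ℝ f p (0, 1)

/-- Partial derivative in the `x` direction, for ℂⁿ-valued maps. -/
def pdxC (φ : ℝ × ℝ → EucC n) (p : ℝ × ℝ) : EucC n := fderiv ℝ φ p (1, 0)

/-- Partial derivative in the `y` direction, for ℂⁿ-valued maps. -/
def pdyC (φ : ℝ × ℝ → EucC n) (p : ℝ × ℝ) : EucC n := fderiv ℝ φ p (0, 1)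

/-- The inclusion ℝⁿ ⊆ ℂⁿ. -/
def cx (v : Euc n) : EucC n := WithLp.toLp 2 (fun k => (v k : ℂ))

/-- Componentwise real part. -/
def reV (w : EucC n) : Euc n := WithLp.toLp 2 (fun k => (w k).re)

/-- Componentwise imaginary part. -/
def imV (w : EucC n) : Euc n := WithLp.toLp 2 (fun k => (w k).im)

/-- The ℂ-bilinear extension of the Euclidean inner product: ⟪u,w⟫ = ∑ uₖwₖ. -/
def bil (u w : EucC n) : ℂ := ∑ k, u k * w k

/-- The Wirtinger derivative ∂/∂z = (1/2)(∂ₓ - i ∂_y). -/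
def pdz (φ : ℝ × ℝ → EucC n) : ℝ × ℝ → EucC n :=
  fun p => (1 / 2 : ℂ) • (pdxC φ p - Complex.I • pdyC φ p)

/-- The Wirtinger derivative ∂/∂z̄ = (1/2)(∂ₓ + i ∂_y). -/
def pdzbar (φ : ℝ × ℝ → EucC n) : ℝ × ℝ → EucC n :=
  fun p => (1 / 2 : ℂ) • (pdxC φ p + Complex.I • pdyC φ p)

/-- φ = f_x - i f_y. -/
def phiOf (f : ℝ × ℝ → Euc n) : ℝ × ℝ → EucC n :=
  fun p => cx (pdx f p) - Complex.I • cx (pdy f p)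

/-- Orthogonal projection onto a subspace, as a map `Euc n → Euc n`. -/
def projSub (K : Submodule ℝ (Euc n)) (v : Euc n) : Euc n :=
  (orthogonalProjection K v : Euc n)

/-- The tangent plane T(p) = span{f_x(p), f_y(p)}. -/
def TangentSp (f : ℝ × ℝ → Euc n) (p : ℝ × ℝ) : Submodule ℝ (Euc n) :=
  span ℝ {pdx f p, pdy f p}

/-- Projection onto the normal space T(p)ᗮ. -/
def nProj (f : ℝ × ℝ → Euc n) (p : ℝ × ℝ) (v : Euc n) : Euc n :=
  v - projSub (TangentSp f p) v

/-- α₁₁ = P(f_xx). -/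
def a11 (f : ℝ × ℝ → Euc n) (p : ℝ × ℝ) : Euc n := nProj f p (pdx (pdx f) p)

/-- α₁₂ = P(f_xy). -/
def a12 (f : ℝ × ℝ → Euc n) (p : ℝ × ℝ) : Euc n := nProj f p (pdx (pdy f) p)

/-- α₂₂ = P(f_yy). -/
def a22 (f : ℝ × ℝ → Euc n) (p : ℝ × ℝ) : Euc n := nProj f p (pdy (pdy f) p)

/-- The first normal space N₁(p). -/
def N1 (f : ℝ × ℝ → Euc n) (p : ℝ × ℝ) : Submodule ℝ (Euc n) :=
  span ℝ {a11 f p, a12 f p, a22 f p}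

/-- Z(p): tangential component of the position vector. -/
def Zt (f : ℝ × ℝ → Euc n) (p : ℝ × ℝ) : Euc n := projSub (TangentSp f p) (f p)

/-- The pedal surface g = f - Z (w.r.t. the origin). -/
def pedal (f : ℝ × ℝ → Euc n) : ℝ × ℝ → Euc n := fun p => f p - Zt f p

/-- δ(p): component of the position vector in N₁(p). -/
def deltaLow (f : ℝ × ℝ → Euc n) (p : ℝ × ℝ) : Euc n := projSub (N1 f p) (f p)

/-- Projection onto (T(p) ⊕ N₁(p))ᗮ. -/
def nProj2 (f : ℝ × ℝ → Euc n) (p : ℝ × ℝ) (v : Euc n) : Euc n :=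
  v - projSub (TangentSp f p ⊔ N1 f p) v

/-- The second normal space N₂(p). -/
def N2 (f : ℝ × ℝ → Euc n) (p : ℝ × ℝ) : Submodule ℝ (Euc n) :=
  span ℝ {nProj2 f p (pdx (pdx (pdx f)) p), nProj2 f p (pdx (pdx (pdy f)) p),
          nProj2 f p (pdx (pdy (pdy f)) p), nProj2 f p (pdy (pdy (pdy f)) p)}

/-- Projection onto (T(p) ⊕ N₁(p) ⊕ N₂(p))ᗮ. -/
def nProj3 (f : ℝ × ℝ → Euc n) (p : ℝ × ℝ) (v : Euc n) : Euc n :=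
  v - projSub (TangentSp f p ⊔ N1 f p ⊔ N2 f p) v

/-- The third normal space N₃(p). -/
def N3 (f : ℝ × ℝ → Euc n) (p : ℝ × ℝ) : Submodule ℝ (Euc n) :=
  span ℝ {nProj3 f p (pdx (pdx (pdx (pdx f))) p), nProj3 f p (pdx (pdx (pdx (pdy f))) p),
          nProj3 f p (pdx (pdx (pdy (pdy f))) p), nProj3 f p (pdx (pdy (pdy (pdy f))) p),
          nProj3 f p (pdy (pdy (pdy (pdy f))) p)}

/-- Smooth immersion on `U`. -/
def IsImmersionOn (f : ℝ × ℝ → Euc n) (U : Set (ℝ × ℝ)) : Prop :=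
  ContDiffOn ℝ (⊤ : ℕ∞) f U ∧ ∀ p ∈ U, LinearIndependent ℝ ![pdx f p, pdy f p]

/-- Conformal immersion on `U`. -/
def IsConformalOn (f : ℝ × ℝ → Euc n) (U : Set (ℝ × ℝ)) : Prop :=
  IsImmersionOn f U ∧ ∀ p ∈ U, (inner ℝ (pdx f p) (pdy f p) : ℝ) = 0 ∧ ‖pdx f p‖ = ‖pdy f p‖

/-- Minimal (conformal harmonic) immersion on `U`. -/
def IsMinimalOn (f : ℝ × ℝ → Euc n) (U : Set (ℝ × ℝ)) : Prop :=
  IsConformalOn f U ∧ ∀ p ∈ U, pdx (pdx f) p + pdy (pdy f) p = 0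

/-- 1-isotropic: ⟪φ′,φ′⟫ ≡ 0. -/
def IsIsotropic1On (f : ℝ × ℝ → Euc n) (U : Set (ℝ × ℝ)) : Prop :=
  ∀ p ∈ U, bil (pdz (phiOf f) p) (pdz (phiOf f) p) = 0

/-- 2-isotropic: moreover ⟪φ″,φ″⟫ ≡ 0. -/
def IsIsotropic2On (f : ℝ × ℝ → Euc n) (U : Set (ℝ × ℝ)) : Prop :=
  IsIsotropic1On f U ∧ ∀ p ∈ U, bil (pdz (pdz (phiOf f)) p) (pdz (pdz (phiOf f)) p) = 0

/-- 3-isotropic: moreover ⟪φ‴,φ‴⟫ ≡ 0. -/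
def IsIsotropic3On (f : ℝ × ℝ → Euc n) (U : Set (ℝ × ℝ)) : Prop :=
  IsIsotropic2On f U ∧
    ∀ p ∈ U, bil (pdz (pdz (pdz (phiOf f))) p) (pdz (pdz (pdz (phiOf f))) p) = 0

/-- Regular (nicely curved): dim N₁ = dim N₂ = 2 everywhere. -/
def IsRegularOn (f : ℝ × ℝ → Euc n) (U : Set (ℝ × ℝ)) : Prop :=
  ∀ p ∈ U, finrank ℝ (N1 f p) = 2 ∧ finrank ℝ (N2 f p) = 2

/-- Substantial: the image is contained in no proper affine subspace. -/
def IsSubstantialOn (f : ℝ × ℝ → Euc n) (U : Set (ℝ × ℝ)) : Prop :=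
  ∀ A : AffineSubspace ℝ (Euc n), (∀ p ∈ U, f p ∈ A) → A = ⊤

/-- ξ₁ = (α₁₁ - α₂₂)/(2‖f_x‖²). -/
def xi1 (f : ℝ × ℝ → Euc n) (p : ℝ × ℝ) : Euc n :=
  (2 * ‖pdx f p‖ ^ 2)⁻¹ • (a11 f p - a22 f p)

/-- ξ₂ = α₁₂/‖f_x‖². -/
def xi2 (f : ℝ × ℝ → Euc n) (p : ℝ × ℝ) : Euc n :=
  (‖pdx f p‖ ^ 2)⁻¹ • a12 f p

/-- Superconformal: the curvature ellipse is a nondegenerate circle at every point. -/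
def IsSuperconformalOn (f : ℝ × ℝ → Euc n) (U : Set (ℝ × ℝ)) : Prop :=
  ∀ p ∈ U, (inner ℝ (xi1 f p) (xi2 f p) : ℝ) = 0 ∧ ‖xi1 f p‖ = ‖xi2 f p‖ ∧ xi1 f p ≠ 0

/-- The Gaussian curvature K = (⟨α₁₁,α₂₂⟩ - ‖α₁₂‖²)/ρ⁴. -/
def Kcurv (f : ℝ × ℝ → Euc n) (p : ℝ × ℝ) : ℝ :=
  ((inner ℝ (a11 f p) (a22 f p) : ℝ) - ‖a12 f p‖ ^ 2) / ‖pdx f p‖ ^ 4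

/-- θ̂ = ‖Z‖² + ‖δ‖². -/
def thetaHat (f : ℝ × ℝ → Euc n) (p : ℝ × ℝ) : ℝ :=
  ‖Zt f p‖ ^ 2 + ‖deltaLow f p‖ ^ 2

/-- JZ = (⟨Z,f_x⟩f_y - ⟨Z,f_y⟩f_x)/ρ². -/
def Jz (f : ℝ × ℝ → Euc n) (p : ℝ × ℝ) : Euc n :=
  (‖pdx f p‖ ^ 2)⁻¹ •
    ((inner ℝ (Zt f p) (pdx f p) : ℝ) • pdy f p - (inner ℝ (Zt f p) (pdy f p) : ℝ) • pdx f p)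

/-- J⊥δ = (⟨δ,α₁₁⟩α₁₂ - ⟨δ,α₁₂⟩α₁₁)/‖α₁₁‖². -/
def JperpDelta (f : ℝ × ℝ → Euc n) (p : ℝ × ℝ) : Euc n :=
  (‖a11 f p‖ ^ 2)⁻¹ •
    ((inner ℝ (deltaLow f p) (a11 f p) : ℝ) • a12 f p - (inner ℝ (deltaLow f p) (a12 f p) : ℝ) • a11 f p)

/-- ℂ-linear extension of the projection onto the normal space of `f`. -/
def nProjC (f : ℝ × ℝ → Euc n) (p : ℝ × ℝ) (w : EucC n) : EucC n :=
  cx (nProj f p (reV w)) + Complex.I • cx (nProj f p (imV w))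

/-- ℂ-linear extension of the projection onto (T ⊕ N₁)ᗮ. -/
def nProj2C (f : ℝ × ℝ → Euc n) (p : ℝ × ℝ) (w : EucC n) : EucC n :=
  cx (nProj2 f p (reV w)) + Complex.I • cx (nProj2 f p (imV w))

/-- g_zz = (1/4)(g_xx - g_yy - 2i g_xy). -/
def gzz (g : ℝ × ℝ → Euc n) (p : ℝ × ℝ) : EucC n :=
  (1 / 4 : ℂ) •
    (cx (pdx (pdx g) p) - cx (pdy (pdy g) p) - (2 * Complex.I) • cx (pdx (pdy g) p))

/-- The inversion ℐ_{p₀,R}. -/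
def inversionMap (p₀ : Euc n) (R : ℝ) (q : Euc n) : Euc n :=
  p₀ + (R ^ 2 / ‖q - p₀‖ ^ 2) • (q - p₀)

/-- The mean curvature vector H = (P(g_xx) + P(g_yy))/(2‖g_x‖²). -/
def meanCurv (g : ℝ × ℝ → Euc n) (p : ℝ × ℝ) : Euc n :=
  (2 * ‖pdx g p‖ ^ 2)⁻¹ • (nProj g p (pdx (pdx g) p) + nProj g p (pdy (pdy g) p))

/-- The pointwise normal component of a fixed vector `v` along `f`. -/
def normalComp (f : ℝ × ℝ → Euc n) (v : Euc n) : ℝ × ℝ → Euc n :=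
  fun p => v - projSub (TangentSp f p) v

/-- Third directional derivative ((cos θ)∂ₓ + (sin θ)∂_y)³ f. -/
def dir3 (f : ℝ × ℝ → Euc n) (θ : ℝ) (p : ℝ × ℝ) : Euc n :=
  (Real.cos θ ^ 3) • pdx (pdx (pdx f)) p
    + (3 * Real.cos θ ^ 2 * Real.sin θ) • pdx (pdx (pdy f)) p
    + (3 * Real.cos θ * Real.sin θ ^ 2) • pdx (pdy (pdy f)) p
    + (Real.sin θ ^ 3) • pdy (pdy (pdy f)) p

section Aux
variable {n : ℕ}

/-- `cx` as a continuous linear map. -/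
def cxL (n : ℕ) : Euc n →L[ℝ] EucC n :=
  LinearMap.toContinuousLinearMap
    { toFun := cx
      map_add' := fun v w => by ext k; simp [cx]
      map_smul' := fun c v => by ext k; simp [cx] }

lemma bil_cx_cx (a b : Euc n) : bil (cx a) (cx b) = ((inner ℝ a b : ℝ) : ℂ) := by
  simp [bil, cx, PiLp.inner_apply, RCLike.inner_apply, conj_trivial, mul_comm]

lemma cx_neg (v : Euc n) : cx (-v) = - cx v := by ext k; simp [cx]

end Aux
section Aux2
variable {n : ℕ}

lemma projSub_span_pair {e1 e2 : Euc n} (h1 : e1 ≠ 0) (h2 : e2 ≠ 0)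
    (h12 : ⟪e1, e2⟫ = 0) (v : Euc n) :
    projSub (span ℝ {e1, e2}) v
      = (⟪v, e1⟫ / ‖e1‖ ^ 2) • e1 + (⟪v, e2⟫ / ‖e2‖ ^ 2) • e2 := by
  have he1 : ‖e1‖ ^ 2 ≠ 0 := pow_ne_zero _ (norm_ne_zero_iff.2 h1)
  have he2 : ‖e2‖ ^ 2 ≠ 0 := pow_ne_zero _ (norm_ne_zero_iff.2 h2)
  have h21 : ⟪e2, e1⟫ = 0 := by rw [real_inner_comm]; exact h12
  rw [projSub, ← Submodule.starProjection_apply]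
  apply Submodule.eq_starProjection_of_mem_of_inner_eq_zero
  · exact add_mem (smul_mem _ _ (subset_span (Set.mem_insert _ _)))
      (smul_mem _ _ (subset_span (Set.mem_insert_of_mem _ rfl)))
  · intro w hw
    obtain ⟨a, b, rfl⟩ := Submodule.mem_span_pair.1 hw
    simp only [inner_sub_left, inner_add_left, inner_add_right, real_inner_smul_left,
      real_inner_smul_right, real_inner_self_eq_norm_sq, h12, h21]
    field_simp
    ring

lemma inner_sub_projSub {e1 e2 : Euc n} (h1 : e1 ≠ 0) (h2 : e2 ≠ 0)
    (h12 : ⟪e1, e2⟫ = 0) (v w : Euc n) :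
    ⟪v - projSub (span ℝ {e1, e2}) v, w - projSub (span ℝ {e1, e2}) w⟫
      = ⟪v, w⟫ - ⟪v, e1⟫ * ⟪w, e1⟫ / ‖e1‖ ^ 2 - ⟪v, e2⟫ * ⟪w, e2⟫ / ‖e2‖ ^ 2 := by
  have he1 : ‖e1‖ ^ 2 ≠ 0 := pow_ne_zero _ (norm_ne_zero_iff.2 h1)
  have he2 : ‖e2‖ ^ 2 ≠ 0 := pow_ne_zero _ (norm_ne_zero_iff.2 h2)
  have h21 : ⟪e2, e1⟫ = 0 := by rw [real_inner_comm]; exact h12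
  rw [projSub_span_pair h1 h2 h12 v, projSub_span_pair h1 h2 h12 w]
  simp only [inner_sub_left, inner_sub_right, inner_add_left, inner_add_right,
    real_inner_smul_left, real_inner_smul_right, real_inner_self_eq_norm_sq, h12, h21,
    real_inner_comm e1 v, real_inner_comm e2 v, real_inner_comm e1 w, real_inner_comm e2 w]
  field_simp
  ring

end Aux2
section Aux3
variable {n : ℕ}

lemma contDiffAt_pd {g : ℝ × ℝ → Euc n} {p : ℝ × ℝ} (hg : ContDiffAt ℝ (⊤ : ℕ∞) g p) (v : ℝ × ℝ) :
    ContDiffAt ℝ (⊤ : ℕ∞) (fun q => fderiv ℝ g q v) p :=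
  (ContinuousLinearMap.apply ℝ (Euc n) v).contDiff.comp_contDiffAt p (hg.fderiv_right (by simp))

lemma contDiffAt_pdx {g : ℝ × ℝ → Euc n} {p : ℝ × ℝ} (hg : ContDiffAt ℝ (⊤ : ℕ∞) g p) :
    ContDiffAt ℝ (⊤ : ℕ∞) (pdx g) p := contDiffAt_pd hg (1, 0)

lemma contDiffAt_pdy {g : ℝ × ℝ → Euc n} {p : ℝ × ℝ} (hg : ContDiffAt ℝ (⊤ : ℕ∞) g p) :
    ContDiffAt ℝ (⊤ : ℕ∞) (pdy g) p := contDiffAt_pd hg (0, 1)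

lemma fderiv_pd_apply {g : ℝ × ℝ → Euc n} {p : ℝ × ℝ} (hg : ContDiffAt ℝ (⊤ : ℕ∞) g p)
    (v w : ℝ × ℝ) :
    fderiv ℝ (fun q => fderiv ℝ g q v) p w = fderiv ℝ (fderiv ℝ g) p w v := by
  have hD : DifferentiableAt ℝ (fderiv ℝ g) p :=
    (hg.fderiv_right (m := 1) (WithTop.coe_le_coe.2 le_top)).differentiableAt one_ne_zero
  have h1 := ((ContinuousLinearMap.apply ℝ (Euc n) v).hasFDerivAt.comp p hD.hasFDerivAt).fderiv
  calc fderiv ℝ (fun q => fderiv ℝ g q v) p w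
      = ((ContinuousLinearMap.apply ℝ (Euc n) v).comp (fderiv ℝ (fderiv ℝ g) p)) w := by
        rw [← h1]; rfl
    _ = fderiv ℝ (fderiv ℝ g) p w v := rfl

lemma pdy_pdx_eq {g : ℝ × ℝ → Euc n} {p : ℝ × ℝ} (hg : ContDiffAt ℝ (⊤ : ℕ∞) g p) :
    pdy (pdx g) p = pdx (pdy g) p := by
  have hs : IsSymmSndFDerivAt ℝ g p := hg.isSymmSndFDerivAt (by simpa using (WithTop.coe_le_coe.2 le_top : (2 : WithTop ℕ∞) ≤ ((⊤ : ℕ∞) : WithTop ℕ∞)))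
  show fderiv ℝ (pdx g) p (0, 1) = fderiv ℝ (pdy g) p (1, 0)
  calc fderiv ℝ (pdx g) p (0, 1)
      = fderiv ℝ (fderiv ℝ g) p (0, 1) (1, 0) := fderiv_pd_apply hg (1, 0) (0, 1)
    _ = fderiv ℝ (fderiv ℝ g) p (1, 0) (0, 1) := hs _ _
    _ = fderiv ℝ (pdy g) p (1, 0) := (fderiv_pd_apply hg (0, 1) (1, 0)).symm

lemma hasFDerivAt_phiOf {f : ℝ × ℝ → Euc n} {p : ℝ × ℝ} (hf : ContDiffAt ℝ (⊤ : ℕ∞) f p) :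
    HasFDerivAt (phiOf f)
      (((cxL n).comp (fderiv ℝ (pdx f) p)) - Complex.I • ((cxL n).comp (fderiv ℝ (pdy f) p)))
      p := by
  have hx : DifferentiableAt ℝ (pdx f) p := (contDiffAt_pdx hf).differentiableAt (by simp)
  have hy : DifferentiableAt ℝ (pdy f) p := (contDiffAt_pdy hf).differentiableAt (by simp)
  have h1 : HasFDerivAt (fun q => cx (pdx f q)) ((cxL n).comp (fderiv ℝ (pdx f) p)) p := by
    exact (cxL n).hasFDerivAt.comp p hx.hasFDerivAt
  have h2 : HasFDerivAt (fun q => cx (pdy f q)) ((cxL n).comp (fderiv ℝ (pdy f) p)) p := by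
    exact (cxL n).hasFDerivAt.comp p hy.hasFDerivAt
  exact h1.sub (h2.const_smul Complex.I)

lemma pdxC_phiOf {f : ℝ × ℝ → Euc n} {p : ℝ × ℝ} (hf : ContDiffAt ℝ (⊤ : ℕ∞) f p) :
    pdxC (phiOf f) p = cx (pdx (pdx f) p) - Complex.I • cx (pdx (pdy f) p) := by
  have h := (hasFDerivAt_phiOf hf).fderiv
  show fderiv ℝ (phiOf f) p (1, 0) = _
  rw [h]; rfl

lemma pdyC_phiOf {f : ℝ × ℝ → Euc n} {p : ℝ × ℝ} (hf : ContDiffAt ℝ (⊤ : ℕ∞) f p) :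
    pdyC (phiOf f) p = cx (pdy (pdx f) p) - Complex.I • cx (pdy (pdy f) p) := by
  have h := (hasFDerivAt_phiOf hf).fderiv
  show fderiv ℝ (phiOf f) p (0, 1) = _
  rw [h]; rfl

end Aux3
section Main
variable {n : ℕ}

lemma bil_expand (u w : EucC n) :
    bil (u - Complex.I • w) (u - Complex.I • w)
      = bil u u - bil w w - 2 * Complex.I * bil u w := by
  simp only [bil, PiLp.sub_apply, PiLp.smul_apply, smul_eq_mul]
  calc ∑ k, (u k - Complex.I * w k) * (u k - Complex.I * w k)
      = ∑ k, (u k * u k - w k * w k - 2 * Complex.I * (u k * w k)) := by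
        refine Finset.sum_congr rfl fun k _ => ?_
        ring_nf
        rw [Complex.I_sq]
        ring
    _ = _ := by
        rw [Finset.sum_sub_distrib, Finset.sum_sub_distrib, ← Finset.mul_sum]

set_option maxHeartbeats 2000000 in
lemma main_pointwise {U : Set (ℝ × ℝ)} (hU : IsOpen U) {f : ℝ × ℝ → Euc n}
    (hmin : IsMinimalOn f U) {p : ℝ × ℝ} (hp : p ∈ U) :
    ((bil (pdz (phiOf f) p) (pdz (phiOf f) p) = 0)
        ↔ (‖a11 f p‖ = ‖a12 f p‖ ∧ ⟪a11 f p, a12 f p⟫ = 0))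
    ∧ (N1 f p ≠ ⊥ ↔ (a11 f p ≠ 0 ∨ a12 f p ≠ 0))
    ∧ (xi1 f p = (‖pdx f p‖ ^ 2)⁻¹ • a11 f p)
    ∧ (pdx f p ≠ 0) := by
  obtain ⟨⟨⟨hsm, himm⟩, hconf⟩, hharm⟩ := hmin
  have hfa : ContDiffAt ℝ (⊤ : ℕ∞) f p := hsm.contDiffAt (hU.mem_nhds hp)
  have hli := himm p hp
  have hfx0 : pdx f p ≠ 0 := by
    have := hli.ne_zero 0
    simpa using this
  have hfy0 : pdy f p ≠ 0 := by
    have := hli.ne_zero 1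
    simpa using this
  have horth : ⟪pdx f p, pdy f p⟫ = 0 := (hconf p hp).1
  have hnorm : ‖pdx f p‖ = ‖pdy f p‖ := (hconf p hp).2
  have hρ2 : ‖pdx f p‖ ^ 2 ≠ 0 := pow_ne_zero _ (norm_ne_zero_iff.2 hfx0)
  -- differentiability of first partials
  have hdx : DifferentiableAt ℝ (pdx f) p := (contDiffAt_pdx hfa).differentiableAt (by simp)
  have hdy : DifferentiableAt ℝ (pdy f) p := (contDiffAt_pdy hfa).differentiableAt (by simp)
  set Fxx := pdx (pdx f) p with hFxxdef
  set Fxy := pdx (pdy f) p with hFxydef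
  -- derivative of ⟪f_x, f_y⟫ = 0
  have hE1 : fderiv ℝ (fun q => ⟪pdx f q, pdy f q⟫) p = 0 := by
    have hev : (fun q => ⟪pdx f q, pdy f q⟫) =ᶠ[nhds p] fun _ => (0 : ℝ) :=
      Filter.eventually_of_mem (hU.mem_nhds hp) (fun q hq => (hconf q hq).1)
    rw [hev.fderiv_eq]; simp
  have hBx : ⟪Fxy, pdx f p⟫ = -⟪Fxx, pdy f p⟫ := by
    have h := fderiv_inner_apply (𝕜 := ℝ) hdx hdy ((1 : ℝ), (0 : ℝ))
    rw [hE1] at h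
    have h' : (0 : ℝ) = ⟪pdx f p, Fxy⟫ + ⟪Fxx, pdy f p⟫ := by simp at h; exact h
    have h'' : ⟪pdx f p, Fxy⟫ = ⟪Fxy, pdx f p⟫ := real_inner_comm _ _
    linarith [h', h'']
  -- derivative of ‖f_x‖² - ‖f_y‖² = 0
  have hE2 : fderiv ℝ (fun q => ⟪pdx f q, pdx f q⟫ - ⟪pdy f q, pdy f q⟫) p = 0 := by
    have hev : (fun q => ⟪pdx f q, pdx f q⟫ - ⟪pdy f q, pdy f q⟫) =ᶠ[nhds p]
        fun _ => (0 : ℝ) := by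
      refine Filter.eventually_of_mem (hU.mem_nhds hp) (fun q hq => ?_)
      have hn := (hconf q hq).2
      simp only [real_inner_self_eq_norm_sq, hn, sub_self]
    rw [hev.fderiv_eq]; simp
  have hAx : ⟪Fxy, pdy f p⟫ = ⟪Fxx, pdx f p⟫ := by
    have hd1 : DifferentiableAt ℝ (fun q => ⟪pdx f q, pdx f q⟫) p := hdx.inner ℝ hdx
    have hd2 : DifferentiableAt ℝ (fun q => ⟪pdy f q, pdy f q⟫) p := hdy.inner ℝ hdy
    have h := fderiv_fun_sub hd1 hd2
    rw [hE2] at h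
    have h0 : (0 : ℝ) = (fderiv ℝ (fun q => ⟪pdx f q, pdx f q⟫) p
        - fderiv ℝ (fun q => ⟪pdy f q, pdy f q⟫) p) ((1 : ℝ), (0 : ℝ)) := by rw [← h]; rfl
    rw [ContinuousLinearMap.sub_apply, fderiv_inner_apply (𝕜 := ℝ) hdx hdx ((1:ℝ),(0:ℝ)),
      fderiv_inner_apply (𝕜 := ℝ) hdy hdy ((1:ℝ),(0:ℝ))] at h0
    have h1 : (0:ℝ) = (⟪pdx f p, Fxx⟫ + ⟪Fxx, pdx f p⟫)
        - (⟪pdy f p, Fxy⟫ + ⟪Fxy, pdy f p⟫) := h0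
    have h2 : ⟪pdx f p, Fxx⟫ = ⟪Fxx, pdx f p⟫ := real_inner_comm _ _
    have h3 : ⟪pdy f p, Fxy⟫ = ⟪Fxy, pdy f p⟫ := real_inner_comm _ _
    linarith [h1, h2, h3]
  -- minimality and symmetry
  have hFyy : pdy (pdy f) p = -Fxx := by
    have := hharm p hp
    exact eq_neg_of_add_eq_zero_left (by rw [add_comm]; exact this)
  have hsymm : pdy (pdx f) p = Fxy := pdy_pdx_eq hfa
  -- φ' = f_xx - i f_xy
  have hpdz : pdz (phiOf f) p = cx Fxx - Complex.I • cx Fxy := by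
    show (1 / 2 : ℂ) • (pdxC (phiOf f) p - Complex.I • pdyC (phiOf f) p) = _
    rw [pdxC_phiOf hfa, pdyC_phiOf hfa, hsymm, hFyy, cx_neg]
    ext k
    simp only [PiLp.smul_apply, PiLp.sub_apply, PiLp.add_apply, PiLp.neg_apply, smul_eq_mul]
    ring_nf
    simp [Complex.I_sq]
    ring
  -- bil(φ',φ')
  have hbil : bil (pdz (phiOf f) p) (pdz (phiOf f) p)
      = ((‖Fxx‖ ^ 2 - ‖Fxy‖ ^ 2 : ℝ) : ℂ) - (2 * ⟪Fxx, Fxy⟫ : ℝ) * Complex.I := by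
    rw [hpdz, bil_expand, bil_cx_cx, bil_cx_cx, bil_cx_cx,
      real_inner_self_eq_norm_sq, real_inner_self_eq_norm_sq]
    push_cast
    ring
  -- projection inner products
  have hip : ∀ v w : Euc n, ⟪nProj f p v, nProj f p w⟫
      = ⟪v, w⟫ - ⟪v, pdx f p⟫ * ⟪w, pdx f p⟫ / ‖pdx f p‖ ^ 2
          - ⟪v, pdy f p⟫ * ⟪w, pdy f p⟫ / ‖pdy f p‖ ^ 2 := fun v w =>
    inner_sub_projSub hfx0 hfy0 horth v w
  have h1112 : ⟪a11 f p, a12 f p⟫ = ⟪Fxx, Fxy⟫ := by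
    have h := hip Fxx Fxy
    rw [hBx, hAx, ← hnorm] at h
    have h' : ⟪a11 f p, a12 f p⟫ = ⟪Fxx, Fxy⟫
        - ⟪Fxx, pdx f p⟫ * -⟪Fxx, pdy f p⟫ / ‖pdx f p‖ ^ 2
        - ⟪Fxx, pdy f p⟫ * ⟪Fxx, pdx f p⟫ / ‖pdx f p‖ ^ 2 := h
    rw [h']; ring
  have h11 : ‖a11 f p‖ ^ 2 = ‖Fxx‖ ^ 2
      - ⟪Fxx, pdx f p⟫ * ⟪Fxx, pdx f p⟫ / ‖pdx f p‖ ^ 2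
      - ⟪Fxx, pdy f p⟫ * ⟪Fxx, pdy f p⟫ / ‖pdx f p‖ ^ 2 := by
    have h := hip Fxx Fxx
    rw [real_inner_self_eq_norm_sq, real_inner_self_eq_norm_sq, ← hnorm] at h
    exact h
  have h12 : ‖a12 f p‖ ^ 2 = ‖Fxy‖ ^ 2
      - (-⟪Fxx, pdy f p⟫) * (-⟪Fxx, pdy f p⟫) / ‖pdx f p‖ ^ 2
      - ⟪Fxx, pdx f p⟫ * ⟪Fxx, pdx f p⟫ / ‖pdx f p‖ ^ 2 := by
    have h := hip Fxy Fxy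
    rw [real_inner_self_eq_norm_sq, real_inner_self_eq_norm_sq, ← hnorm, hBx, hAx] at h
    exact h
  have hdiff : ‖a11 f p‖ ^ 2 - ‖a12 f p‖ ^ 2 = ‖Fxx‖ ^ 2 - ‖Fxy‖ ^ 2 := by
    rw [h11, h12]; ring
  -- a22 = -a11
  have ha22 : a22 f p = -a11 f p := by
    show nProj f p (pdy (pdy f) p) = -nProj f p Fxx
    rw [hFyy]
    simp only [nProj, projSub, map_neg, Submodule.coe_neg]
    abel
  have hxi1 : xi1 f p = (‖pdx f p‖ ^ 2)⁻¹ • a11 f p := by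
    show (2 * ‖pdx f p‖ ^ 2)⁻¹ • (a11 f p - a22 f p) = _
    rw [ha22, sub_neg_eq_add, ← two_smul ℝ, smul_smul]
    congr 1
    field_simp
  have hN1 : N1 f p ≠ ⊥ ↔ (a11 f p ≠ 0 ∨ a12 f p ≠ 0) := by
    have hb : N1 f p = ⊥ ↔ (a11 f p = 0 ∧ a12 f p = 0) := by
      rw [show N1 f p = span ℝ {a11 f p, a12 f p, a22 f p} from rfl, Submodule.span_eq_bot]
      constructor
      · intro h; exact ⟨h _ (by simp), h _ (by simp)⟩
      · rintro ⟨h1, h2⟩ x hx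
        simp only [Set.mem_insert_iff, Set.mem_singleton_iff] at hx
        rcases hx with rfl | rfl | rfl
        · exact h1
        · exact h2
        · rw [ha22, h1, neg_zero]
    rw [Ne, hb]
    tauto
  have hsq : ‖a11 f p‖ ^ 2 = ‖a12 f p‖ ^ 2 ↔ ‖a11 f p‖ = ‖a12 f p‖ := by
    constructor
    · intro h
      nlinarith [norm_nonneg (a11 f p), norm_nonneg (a12 f p)]
    · intro h; rw [h]
  refine ⟨?_, hN1, hxi1, hfx0⟩
  rw [hbil]
  constructor
  · intro h
    have hre := congrArg Complex.re h
    have him := congrArg Complex.im h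
    simp only [Complex.sub_re, Complex.ofReal_re, Complex.mul_re, Complex.I_re, Complex.I_im,
      Complex.ofReal_im, Complex.sub_im, Complex.mul_im, Complex.zero_re, Complex.zero_im,
      mul_zero, mul_one, zero_mul, sub_zero, zero_sub, zero_add] at hre him
    constructor
    · rw [← hsq]
      linarith [hdiff, hre]
    · rw [h1112]
      linarith [him]
  · rintro ⟨h1, h2⟩
    have he1 : ‖Fxx‖ ^ 2 - ‖Fxy‖ ^ 2 = 0 := by
      rw [← hdiff, hsq.2 h1]; ring
    have he2 : ⟪Fxx, Fxy⟫ = 0 := by rw [← h1112]; exact h2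
    rw [he1, he2]
    simp

end Main
/-- A minimal immersion is superconformal iff it is 1-isotropic with
nontrivial first normal spaces. -/
theorem minimal_superconformal_iff_isotropic1
    {n : ℕ} (U : Set (ℝ × ℝ)) (hU : IsOpen U) (hUconn : IsConnected U)
    (f : ℝ × ℝ → Euc n) (hmin : IsMinimalOn f U) :
    IsSuperconformalOn f U ↔ (IsIsotropic1On f U ∧ ∀ p ∈ U, N1 f p ≠ ⊥) := by
  have key : ∀ p ∈ U,
      ((inner ℝ (xi1 f p) (xi2 f p) : ℝ) = 0 ∧ ‖xi1 f p‖ = ‖xi2 f p‖ ∧ xi1 f p ≠ 0) ↔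
        (bil (pdz (phiOf f) p) (pdz (phiOf f) p) = 0 ∧ N1 f p ≠ ⊥) := by
    intro p hp
    obtain ⟨hbil, hN1, hxi1, hfx0⟩ := main_pointwise hU hmin hp
    have hc : (0 : ℝ) < (‖pdx f p‖ ^ 2)⁻¹ :=
      inv_pos.2 (pow_pos (norm_pos_iff.2 hfx0) 2)
    have hxi2 : xi2 f p = (‖pdx f p‖ ^ 2)⁻¹ • a12 f p := rfl
    have hiprod : ⟪xi1 f p, xi2 f p⟫
        = (‖pdx f p‖ ^ 2)⁻¹ * ((‖pdx f p‖ ^ 2)⁻¹ * ⟪a11 f p, a12 f p⟫) := by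
      rw [hxi1, hxi2, real_inner_smul_left, real_inner_smul_right]
    have hnorm1 : ‖xi1 f p‖ = (‖pdx f p‖ ^ 2)⁻¹ * ‖a11 f p‖ := by
      rw [hxi1, norm_smul, Real.norm_eq_abs, abs_of_pos hc]
    have hnorm2 : ‖xi2 f p‖ = (‖pdx f p‖ ^ 2)⁻¹ * ‖a12 f p‖ := by
      rw [hxi2, norm_smul, Real.norm_eq_abs, abs_of_pos hc]
    have hne1 : xi1 f p ≠ 0 ↔ a11 f p ≠ 0 := by
      rw [Ne, hxi1, smul_eq_zero]
      simp [hc.ne']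
    constructor
    · rintro ⟨hi, hn, hz⟩
      have ha0 : ⟪a11 f p, a12 f p⟫ = 0 := by
        rw [hiprod] at hi
        rcases mul_eq_zero.1 hi with h | h
        · exact absurd h hc.ne'
        · rcases mul_eq_zero.1 h with h' | h'
          · exact absurd h' hc.ne'
          · exact h'
      have hna : ‖a11 f p‖ = ‖a12 f p‖ := by
        rw [hnorm1, hnorm2] at hn
        exact mul_left_cancel₀ hc.ne' hn
      exact ⟨hbil.2 ⟨hna, ha0⟩, hN1.2 (Or.inl (hne1.1 hz))⟩
    · rintro ⟨hb, hn⟩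
      obtain ⟨hna, ha0⟩ := hbil.1 hb
      have ha11 : a11 f p ≠ 0 := by
        rcases hN1.1 hn with h | h
        · exact h
        · intro hz
          apply h
          rw [← norm_eq_zero, ← hna, hz, norm_zero]
      refine ⟨by rw [hiprod, ha0, mul_zero, mul_zero], ?_, hne1.2 ha11⟩
      rw [hnorm1, hnorm2, hna]
  constructor
  · intro hsc
    refine ⟨fun p hp => ((key p hp).1 (hsc p hp)).1, fun p hp => ((key p hp).1 (hsc p hp)).2⟩
  · rintro ⟨hiso, hn1⟩ p hp
    exact (key p hp).2 ⟨hiso p hp, hn1 p hp⟩
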